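/- arXiv:1003.4771 — 4 statements merged into one kernel-verified Lean document; each statement's English description precedes it below -/
import Mathlib

section
/- Let σ, τ > 0, στ < 1, η² > 4σ, 1 + αβ > 0 and α + σβ > 0, where α = (η + θσ)/(1 - στ), β = (ητ + θ)/(1 - στ) and η = α - σβ. Define t* = (α + σβ)(1 - στ)/(2σ√((α - σβ)² - 4σ)) - (1 + στ)/(2σ). Then (1 + σ t*)(t* + τ) = (1 - στ)²(1 + αβ)/(η² - 4σ) > 0. -/
/-!
With `s = √(η² - 4σ)` and `A = α + σβ`, the two factors are
`1 + σ t* = (1 - στ)(A + s)/(2s)` and `t* + τ = (1 - στ)(A - s)/(2σs)`, so their product is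
`(1 - στ)² (A² - s²)/(4σs²)`. Since `α - σβ = η`, we get
`A² - s² = (α + σβ)² - (α - σβ)² + 4σ = 4σ(1 + αβ)`.
-/

lemma sub_mul_eq_of_eq_div {σ τ η θ α β : ℝ} (hστ : 1 - σ * τ ≠ 0)
    (hα : α = (η + θ * σ) / (1 - σ * τ)) (hβ : β = (η * τ + θ) / (1 - σ * τ)) :
    α - σ * β = η := by
  rw [hα, hβ]
  field_simp
  ring

lemma one_add_mul_mul_add_eq {σ τ A s t : ℝ} (hσ : σ ≠ 0) (hs : s ≠ 0)
    (ht : t = A * (1 - σ * τ) / (2 * σ * s) - (1 + σ * τ) / (2 * σ)) :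
    (1 + σ * t) * (t + τ) = (1 - σ * τ) ^ 2 * (A ^ 2 - s ^ 2) / (4 * σ * s ^ 2) := by
  subst ht
  field_simp
  ring

theorem tstar_identity_general (σ τ η θ α β tstar : ℝ)
    (hσ : 0 < σ) (hστ : σ * τ < 1) (hη : η ^ 2 > 4 * σ)
    (hα : α = (η + θ * σ) / (1 - σ * τ))
    (hβ : β = (η * τ + θ) / (1 - σ * τ))
    (hab : 1 + α * β > 0)
    (ht : tstar = (α + σ * β) * (1 - σ * τ) /
        (2 * σ * Real.sqrt ((α - σ * β) ^ 2 - 4 * σ)) - (1 + σ * τ) / (2 * σ)) :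
    (1 + σ * tstar) * (tstar + τ) = (1 - σ * τ) ^ 2 * (1 + α * β) / (η ^ 2 - 4 * σ) ∧
    0 < (1 + σ * tstar) * (tstar + τ) := by
  have hστ_ne : 1 - σ * τ ≠ 0 := by linarith
  have hdisc : 0 < η ^ 2 - 4 * σ := by linarith
  have hdiff := sub_mul_eq_of_eq_div hστ_ne hα hβ
  rw [hdiff] at ht
  have hs : Real.sqrt (η ^ 2 - 4 * σ) ≠ 0 := (Real.sqrt_pos.mpr hdisc).ne'
  have key := one_add_mul_mul_add_eq hσ.ne' hs ht
  rw [Real.sq_sqrt hdisc.le,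
    show (α + σ * β) ^ 2 - (η ^ 2 - 4 * σ) = 4 * σ * (1 + α * β) by rw [← hdiff]; ring] at key
  have identity : (1 + σ * tstar) * (tstar + τ) =
      (1 - σ * τ) ^ 2 * (1 + α * β) / (η ^ 2 - 4 * σ) := by
    rw [key]
    field_simp
  refine ⟨identity, ?_⟩
  rw [identity]
  positivity

theorem tstar_identity (σ τ η θ α β tstar : ℝ)
    (hσ : 0 < σ) (hτ : 0 < τ) (hστ : σ * τ < 1) (hη : η ^ 2 > 4 * σ)
    (hα : α = (η + θ * σ) / (1 - σ * τ))
    (hβ : β = (η * τ + θ) / (1 - σ * τ))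
    (hab : 1 + α * β > 0) (habs : α + σ * β > 0)
    (ht : tstar = (α + σ * β) * (1 - σ * τ) /
        (2 * σ * Real.sqrt ((α - σ * β) ^ 2 - 4 * σ)) - (1 + σ * τ) / (2 * σ)) :
    (1 + σ * tstar) * (tstar + τ) = (1 - σ * τ) ^ 2 * (1 + α * β) / (η ^ 2 - 4 * σ) ∧
    0 < (1 + σ * tstar) * (tstar + τ) :=
  tstar_identity_general σ τ η θ α β tstar hσ hστ hη hα hβ hab ht
end

section
/- Under the hypotheses σ, τ > 0, στ < 1, η² > 4σ, θ² > 4τ, 1 + αβ > 0, α + σβ > 0 (with α = (η + θσ)/(1 - στ), β = (ητ + θ)/(1 - στ)), the function a₋(t) = ((α + σβ)t + β + τα - 2√((1 + σt)(t + τ)(1 + αβ)))/(1 - στ) attains its global minimum on (0, ∞) at t* = (α + σβ)(1 - στ)/(2σ√(η² - 4σ)) - (1 + στ)/(2σ), and a₋(t*) = (-η + √(η² - 4σ))/(2σ). Consequently a₋(t) ≥ (-η + √(η² - 4σ))/(2σ) for all t > 0. -/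
/-!
Write `c = α + σβ` and `s = √(η² - 4σ)`. Since `α - σβ = η`, we have `c² = s² + 4σ(1 + αβ)`,
and the radicand of `a₋` completes to a difference of squares of two affine functions of `t`:
`16σ²(1 + σt)(t + τ)(1 + αβ) = L(t)² - R(t)²` with `L = majorant`, `R = defect`. Hence
`2σ(1 - στ)(a₋(t) - b₊) = L(t) - √(L(t)² - R(t)²)`, which is nonnegative wherever `L(t) ≥ 0`,
in particular for `t > 0`, and vanishes at the root `t*` of `R`, where `L(t*) > 0`.
-/

open Real

lemma Real.sqrt_sq_sub_sq_le {L : ℝ} (R : ℝ) (hL : 0 ≤ L) : √(L ^ 2 - R ^ 2) ≤ L :=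
  (sqrt_le_left hL).2 (by nlinarith [sq_nonneg R])

def majorant (σ τ α β s t : ℝ) : ℝ :=
  2 * σ * (α + σ * β) * t + (α + σ * β) * (1 + σ * τ) - (1 - σ * τ) * s

def defect (σ τ α β s t : ℝ) : ℝ :=
  2 * σ * s * t - (α + σ * β) * (1 - σ * τ) + (1 + σ * τ) * s

section

variable {σ τ α β s : ℝ}

lemma sixteen_mul_radicand_eq_sq_sub_sq (hs : s ^ 2 = (α - σ * β) ^ 2 - 4 * σ) (t : ℝ) :
    16 * σ ^ 2 * ((1 + σ * t) * (t + τ) * (1 + α * β))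
      = majorant σ τ α β s t ^ 2 - defect σ τ α β s t ^ 2 := by
  unfold majorant defect
  linear_combination 4 * σ * (1 + σ * t) * (t + τ) * hs

lemma two_mul_sub_eq_majorant_sub_sqrt (hσ : 0 < σ) (hστ : σ * τ < 1)
    (hs : s ^ 2 = (α - σ * β) ^ 2 - 4 * σ) (t : ℝ) :
    2 * σ * (1 - σ * τ) * (((α + σ * β) * t + β + τ * α
        - 2 * √((1 + σ * t) * (t + τ) * (1 + α * β))) / (1 - σ * τ)
        - (-(α - σ * β) + s) / (2 * σ))
      = majorant σ τ α β s t - √(majorant σ τ α β s t ^ 2 - defect σ τ α β s t ^ 2) := by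
  have hu : 1 - σ * τ ≠ 0 := by linarith
  have hsqrt : √(16 * σ ^ 2 * ((1 + σ * t) * (t + τ) * (1 + α * β)))
      = 4 * σ * √((1 + σ * t) * (t + τ) * (1 + α * β)) := by
    rw [sqrt_mul (by positivity), show (16 : ℝ) * σ ^ 2 = (4 * σ) ^ 2 by ring,
      sqrt_sq (by positivity)]
  rw [← sixteen_mul_radicand_eq_sq_sub_sq hs, hsqrt, majorant]
  field_simp
  ring

lemma majorant_pos_of_nonneg (hσ : 0 < σ) (hτ : 0 < τ) (hs : 0 ≤ s) (hsc : s < α + σ * β)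
    {t : ℝ} (ht : 0 ≤ t) :
    0 < majorant σ τ α β s t := by
  unfold majorant
  have : 0 ≤ σ * τ * (α + σ * β + s) := mul_nonneg (by positivity) (by linarith)
  nlinarith [mul_nonneg (mul_nonneg hσ.le (hs.trans hsc.le)) ht]

variable {t : ℝ}

lemma defect_eq_zero_of_eq_critical (hσ : 0 < σ) (hs : 0 < s)
    (ht : t = (α + σ * β) * (1 - σ * τ) / (2 * σ * s) - (1 + σ * τ) / (2 * σ)) :
    defect σ τ α β s t = 0 := by
  rw [defect, ht]
  field_simp
  ring

lemma majorant_pos_of_eq_critical (hσ : 0 < σ) (hστ : σ * τ < 1) (hs : 0 < s)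
    (hc : (α + σ * β) ^ 2 = s ^ 2 + 4 * σ * (1 + α * β)) (hab : 0 < 1 + α * β)
    (ht : t = (α + σ * β) * (1 - σ * τ) / (2 * σ * s) - (1 + σ * τ) / (2 * σ)) :
    0 < majorant σ τ α β s t := by
  have hR := defect_eq_zero_of_eq_critical hσ hs ht
  have hu : 0 < 1 - σ * τ := by linarith
  -- the vanishing defect turns `s * majorant` into `(1 - στ)(c² - s²)`
  have hsL : s * majorant σ τ α β s t = 4 * σ * (1 + α * β) * (1 - σ * τ) := by
    unfold majorant defect at *
    linear_combination (α + σ * β) * hR + (1 - σ * τ) * hc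
  exact pos_of_mul_pos_right (hsL ▸ by positivity) hs.le

end

theorem a_minus_global_minimum_general (σ τ η θ α β tstar bplus : ℝ)
    (hσ : 0 < σ) (hτ : 0 < τ) (hστ : σ * τ < 1)
    (hη : η ^ 2 > 4 * σ)
    (hα : α = (η + θ * σ) / (1 - σ * τ))
    (hβ : β = (η * τ + θ) / (1 - σ * τ))
    (hab : 1 + α * β > 0) (habs : α + σ * β > 0)
    (a : ℝ → ℝ)
    (ha : ∀ t, a t = ((α + σ * β) * t + β + τ * α
        - 2 * Real.sqrt ((1 + σ * t) * (t + τ) * (1 + α * β))) / (1 - σ * τ))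
    (ht : tstar = (α + σ * β) * (1 - σ * τ) / (2 * σ * Real.sqrt (η ^ 2 - 4 * σ))
        - (1 + σ * τ) / (2 * σ))
    (hb : bplus = (-η + Real.sqrt (η ^ 2 - 4 * σ)) / (2 * σ)) :
    (∀ t > 0, a tstar ≤ a t) ∧ a tstar = bplus ∧ ∀ t > 0, bplus ≤ a t := by
  set s := √(η ^ 2 - 4 * σ)
  have hu : 1 - σ * τ ≠ 0 := by linarith
  have hη' : α - σ * β = η := by
    rw [hα, hβ]
    field_simp
    ring
  have hs : s ^ 2 = (α - σ * β) ^ 2 - 4 * σ := by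
    rw [hη', sq_sqrt (by linarith)]
  have hs0 : 0 < s := sqrt_pos.2 (by linarith)
  have hc : (α + σ * β) ^ 2 = s ^ 2 + 4 * σ * (1 + α * β) := by
    rw [hs]
    ring
  have hsc : s < α + σ * β := lt_of_pow_lt_pow_left₀ 2 habs.le (by nlinarith)
  have hscale : 0 < 2 * σ * (1 - σ * τ) := mul_pos (by positivity) (by linarith)
  have key := two_mul_sub_eq_majorant_sub_sqrt (τ := τ) hσ hστ hs
  simp only [hη', ← ha, ← hb] at key
  have hmin : ∀ t > 0, bplus ≤ a t := fun t htpos ↦ by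
    have hL := majorant_pos_of_nonneg hσ hτ hs0.le hsc htpos.le
    have := key t ▸ sub_nonneg.2 (sqrt_sq_sub_sq_le _ hL.le)
    exact sub_nonneg.1 ((mul_nonneg_iff_of_pos_left hscale).1 this)
  have heq : a tstar = bplus := by
    have hL := majorant_pos_of_eq_critical hσ hστ hs0 hc hab ht
    have := key tstar
    rw [defect_eq_zero_of_eq_critical hσ hs0 ht, zero_pow two_ne_zero, sub_zero, sqrt_sq hL.le,
      sub_self, mul_eq_zero, sub_eq_zero] at this
    exact this.resolve_left hscale.ne'
  exact ⟨fun t ht ↦ heq ▸ hmin t ht, heq, hmin⟩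

theorem a_minus_global_minimum (σ τ η θ α β tstar bplus : ℝ)
    (hσ : 0 < σ) (hτ : 0 < τ) (hστ : σ * τ < 1)
    (hη : η ^ 2 > 4 * σ) (hθ : θ ^ 2 > 4 * τ)
    (hα : α = (η + θ * σ) / (1 - σ * τ))
    (hβ : β = (η * τ + θ) / (1 - σ * τ))
    (hab : 1 + α * β > 0) (habs : α + σ * β > 0)
    (a : ℝ → ℝ)
    (ha : ∀ t, a t = ((α + σ * β) * t + β + τ * α
        - 2 * Real.sqrt ((1 + σ * t) * (t + τ) * (1 + α * β))) / (1 - σ * τ))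
    (ht : tstar = (α + σ * β) * (1 - σ * τ) / (2 * σ * Real.sqrt (η ^ 2 - 4 * σ))
        - (1 + σ * τ) / (2 * σ))
    (hb : bplus = (-η + Real.sqrt (η ^ 2 - 4 * σ)) / (2 * σ)) :
    (∀ t > 0, a tstar ≤ a t) ∧ a tstar = bplus ∧ ∀ t > 0, bplus ≤ a t :=
  a_minus_global_minimum_general σ τ η θ α β tstar bplus hσ hτ hστ hη hα hβ hab habs a ha ht hb
end

section
/- Suppose σ, τ > 0, στ < 1, η > 0, θ > 0, θ² > 4τ, η² > 4σ and 1 + αβ > 0 where α = (η + θσ)/(1 - στ), β = (ητ + θ)/(1 - στ). Then 2τ√(θ² - 4τ)/((θ - √(θ² - 4τ))(1 + στ) + 2ητ) < (θ + √(θ² - 4τ))/(η + √(η² - 4σ)). -/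
/-!
Write `s = √(θ² - 4τ)` and `r = √(η² - 4σ)`. Since `(θ + s)(θ - s) = 4τ`, clearing denominators
and dividing by `2τ` reduces the claim to `s r < η θ + 2 (1 + σ τ)`, which holds because
`s < θ` and `r < η`.
-/

lemma Real.sqrt_sq_sub_lt {x c : ℝ} (hx : 0 < x) (hc : 0 < c) : √(x ^ 2 - c) < x :=
  (Real.sqrt_lt' hx).mpr (by linarith)

lemma add_mul_sub_mul_add_eq_of_sq_eq {θ τ s k η : ℝ} (hs : s ^ 2 = θ ^ 2 - 4 * τ) :
    (θ + s) * ((θ - s) * k + 2 * η * τ) = 2 * τ * (2 * k + η * (θ + s)) := by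
  linear_combination (-k) * hs

theorem atom_interval_bound_general (σ τ η θ : ℝ)
    (hσ : 0 < σ) (hτ : 0 < τ)
    (hη0 : 0 < η) (hθ0 : 0 < θ)
    (hθ : θ ^ 2 > 4 * τ) :
    2 * τ * Real.sqrt (θ ^ 2 - 4 * τ) /
        ((θ - Real.sqrt (θ ^ 2 - 4 * τ)) * (1 + σ * τ) + 2 * η * τ)
      < (θ + Real.sqrt (θ ^ 2 - 4 * τ)) / (η + Real.sqrt (η ^ 2 - 4 * σ)) := by
  set s := √(θ ^ 2 - 4 * τ)
  set r := √(η ^ 2 - 4 * σ)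
  have hsθ : s < θ := Real.sqrt_sq_sub_lt hθ0 (by positivity)
  have hrη : r < η := Real.sqrt_sq_sub_lt hη0 (by positivity)
  have hsr : s * r < θ * η := mul_lt_mul'' hsθ hrη (Real.sqrt_nonneg _) (Real.sqrt_nonneg _)
  have hden : 0 < (θ - s) * (1 + σ * τ) + 2 * η * τ :=
    add_pos (mul_pos (sub_pos.mpr hsθ) (by positivity)) (by positivity)
  rw [div_lt_div_iff₀ hden (by positivity),
    add_mul_sub_mul_add_eq_of_sq_eq (Real.sq_sqrt (by linarith)), mul_assoc]
  gcongr
  nlinarith [mul_pos hσ hτ]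

theorem atom_interval_bound (σ τ η θ α β : ℝ)
    (hσ : 0 < σ) (hτ : 0 < τ) (hστ : σ * τ < 1)
    (hη0 : 0 < η) (hθ0 : 0 < θ)
    (hη : η ^ 2 > 4 * σ) (hθ : θ ^ 2 > 4 * τ)
    (hα : α = (η + θ * σ) / (1 - σ * τ))
    (hβ : β = (η * τ + θ) / (1 - σ * τ))
    (hab : 1 + α * β > 0) :
    2 * τ * Real.sqrt (θ ^ 2 - 4 * τ) /
        ((θ - Real.sqrt (θ ^ 2 - 4 * τ)) * (1 + σ * τ) + 2 * η * τ)
      < (θ + Real.sqrt (θ ^ 2 - 4 * τ)) / (η + Real.sqrt (η ^ 2 - 4 * σ)) :=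
  atom_interval_bound_general σ τ η θ hσ hτ hη0 hθ0 hθ
end

section
/- With the coefficients defined by A_{t,s,u} = (u-t)[u(1+σt)+τ-γt]/((u-s)[u(1+σs)+τ-γs]), B_{t,s,u} = (u-t)(t-s)(1+γ)/((u-s)[u(1+σs)+τ-γs]), C_{t,s,u} = (t-s)[t(1+σs)+τ-γs]/((u-s)[u(1+σs)+τ-γs]), D_{t,s,u} = (u-t)(t-s)(uη-θ)/((u-s)[u(1+σs)+τ-γs]), E_{t,s,u} = (u-t)(t-s)(θ-sη)/((u-s)[u(1+σs)+τ-γs]), F_{t,s,u} = (u-t)(t-s)/(u(1+σs)+τ-γs): if x, y are elements of an associative unital algebra satisfying xy - γyx = σx² + τy² + ηx + θy + 1 and X_t = x + t·y, then for all 0 ≤ s < t < u with u(1+σs)+τ-γs ≠ 0, X_t² = A_{t,s,u}X_s² + B_{t,s,u}X_uX_s + C_{t,s,u}X_u² + D_{t,s,u}X_s + E_{t,s,u}X_u + F_{t,s,u}. -/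
theorem Xt_squared_quadratic_form {A : Type*} [Ring A] [Algebra ℝ A]
    (η θ σ τ γ : ℝ) (x y : A)
    (hxy : x * y - γ • (y * x) = σ • (x * x) + τ • (y * y) + η • x + θ • y + 1)
    (X : ℝ → A) (hX : ∀ t, X t = x + t • y)
    (s t u : ℝ) (hs : 0 ≤ s) (hst : s < t) (htu : t < u)
    (hden : u * (1 + σ * s) + τ - γ * s ≠ 0) :
    X t * X t =
      ((u - t) * (u * (1 + σ * t) + τ - γ * t) /
          ((u - s) * (u * (1 + σ * s) + τ - γ * s))) • (X s * X s)
      + ((u - t) * (t - s) * (1 + γ) /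
          ((u - s) * (u * (1 + σ * s) + τ - γ * s))) • (X u * X s)
      + ((t - s) * (t * (1 + σ * s) + τ - γ * s) /
          ((u - s) * (u * (1 + σ * s) + τ - γ * s))) • (X u * X u)
      + ((u - t) * (t - s) * (u * η - θ) /
          ((u - s) * (u * (1 + σ * s) + τ - γ * s))) • X s
      + ((u - t) * (t - s) * (θ - s * η) /
          ((u - s) * (u * (1 + σ * s) + τ - γ * s))) • X u
      + ((u - t) * (t - s) / (u * (1 + σ * s) + τ - γ * s)) • (1 : A) := by
  have hxy' : x * y = γ • (y * x) + σ • (x * x) + τ • (y * y) + η • x + θ • y + 1 := by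
    rw [sub_eq_iff_eq_add] at hxy
    rw [hxy]; abel
  have key : ∀ a b : ℝ, X a * X b
      = (1 + b * σ) • (x * x) + (a + b * γ) • (y * x) + (a * b + b * τ) • (y * y)
        + (b * η) • x + (b * θ) • y + b • (1 : A) := by
    intro a b
    rw [hX, hX, add_mul, mul_add, mul_add, smul_mul_assoc, smul_mul_assoc,
      mul_smul_comm, hxy', mul_smul_comm]
    module
  have hus : u - s ≠ 0 := by nlinarith
  rw [key, key, key, key, hX, hX]
  match_scalars <;> field_simp <;> ring
end
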